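/- arXiv:1205.6236 — 4 statements merged into one kernel-verified Lean document; each statement's English description precedes it below -/
import Mathlib

section
/- For all positive integers n and all integers k, the sum over all k-subsets J of {1,...,n} whose elements are all congruent to n modulo 2 of the product over j in J of j^2 equals the sum over all k-subsets J of {1,...,n} containing no two consecutive integers of the product over j in J of j(n+1-j). -/
open Finset

namespace BorweinAux

/-- Weighted sum over no-two-consecutive k-subsets of [m]. -/
def T (w : ℕ → ℕ) (m : ℕ) (k : ℤ) : ℕ :=
  ∑ J ∈ (Finset.Icc 1 m).powerset.filter
      (fun J => (J.card : ℤ) = k ∧ ∀ j ∈ J, j + 1 ∉ J),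
    ∏ j ∈ J, w j

/-- Sum of products of squares over k-subsets of [n] all congruent to n mod 2. -/
def U (n : ℕ) (k : ℤ) : ℕ :=
  ∑ J ∈ (Finset.Icc 1 n).powerset.filter
      (fun J => (J.card : ℤ) = k ∧ ∀ j ∈ J, j % 2 = n % 2),
    ∏ j ∈ J, j ^ 2

lemma T_zero (w : ℕ → ℕ) (k : ℤ) : T w 0 k = if k = 0 then 1 else 0 := by
  unfold T
  rw [show Finset.Icc 1 0 = (∅ : Finset ℕ) from Finset.Icc_eq_empty (by omega)]
  rw [Finset.powerset_empty, Finset.filter_singleton]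
  by_cases hk : k = 0
  · simp [hk]
  · simp [hk, eq_comm]

lemma U_zero (k : ℤ) : U 0 k = if k = 0 then 1 else 0 := by
  unfold U
  rw [show Finset.Icc 1 0 = (∅ : Finset ℕ) from Finset.Icc_eq_empty (by omega)]
  rw [Finset.powerset_empty, Finset.filter_singleton]
  by_cases hk : k = 0
  · simp [hk]
  · simp [hk, eq_comm]

lemma Trec (w : ℕ → ℕ) {m : ℕ} (hm : 1 ≤ m) (k : ℤ) :
    T w m k = T w (m - 1) k + w m * T w (m - 2) (k - 1) := by
  classical
  have hsplit := Finset.sum_filter_add_sum_filter_not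
      ((Finset.Icc 1 m).powerset.filter
        (fun J => (J.card : ℤ) = k ∧ ∀ j ∈ J, j + 1 ∉ J))
      (fun J => m ∉ J) (fun J => ∏ j ∈ J, w j)
  have hA : ((Finset.Icc 1 m).powerset.filter
        (fun J => (J.card : ℤ) = k ∧ ∀ j ∈ J, j + 1 ∉ J)).filter (fun J => m ∉ J)
      = (Finset.Icc 1 (m - 1)).powerset.filter
        (fun J => (J.card : ℤ) = k ∧ ∀ j ∈ J, j + 1 ∉ J) := by
    ext J
    simp only [Finset.mem_filter, Finset.mem_powerset, Finset.subset_iff, Finset.mem_Icc]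
    constructor
    · rintro ⟨⟨hsub, hcard, hnc⟩, hm'⟩
      refine ⟨fun j hj => ?_, hcard, hnc⟩
      have h1 := hsub hj
      have h2 : j ≠ m := fun h => hm' (h ▸ hj)
      omega
    · rintro ⟨hsub, hcard, hnc⟩
      refine ⟨⟨fun j hj => ?_, hcard, hnc⟩, fun hmem => ?_⟩
      · have h1 := hsub hj; omega
      · have h1 := hsub hmem; omega
  have hB : ∑ J ∈ ((Finset.Icc 1 m).powerset.filter
        (fun J => (J.card : ℤ) = k ∧ ∀ j ∈ J, j + 1 ∉ J)).filter (fun J => ¬ m ∉ J),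
        ∏ j ∈ J, w j
      = w m * T w (m - 2) (k - 1) := by
    unfold T
    rw [Finset.mul_sum]
    refine Finset.sum_nbij' (fun J => J.erase m) (fun J' => insert m J') ?_ ?_ ?_ ?_ ?_
    · intro J hJ
      simp only [Finset.mem_filter, Finset.mem_powerset, not_not] at hJ
      obtain ⟨⟨hsub, hcard, hnc⟩, hmem⟩ := hJ
      simp only [Finset.mem_filter, Finset.mem_powerset]
      refine ⟨?_, ?_, ?_⟩
      · intro j hj
        have hj' := Finset.mem_of_mem_erase hj
        have hne : j ≠ m := Finset.ne_of_mem_erase hj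
        have h1 := hsub hj'
        simp only [Finset.mem_Icc] at h1 ⊢
        have hne2 : j ≠ m - 1 := by
          intro h
          have : j + 1 = m := by omega
          exact hnc j hj' (this ▸ hmem)
        omega
      · rw [Finset.card_erase_of_mem hmem]
        have h1 : 1 ≤ J.card := Finset.card_pos.mpr ⟨m, hmem⟩
        omega
      · intro j hj
        have hj' := Finset.mem_of_mem_erase hj
        intro hc
        exact hnc j hj' (Finset.mem_of_mem_erase hc)
    · intro J' hJ'
      simp only [Finset.mem_filter, Finset.mem_powerset] at hJ'
      obtain ⟨hsub, hcard, hnc⟩ := hJ'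
      have hnotmem : m ∉ J' := by
        intro h
        have := hsub h
        simp only [Finset.mem_Icc] at this
        omega
      simp only [Finset.mem_filter, Finset.mem_powerset, not_not]
      refine ⟨⟨?_, ?_, ?_⟩, Finset.mem_insert_self m J'⟩
      · intro j hj
        rcases Finset.mem_insert.mp hj with h | h
        · subst h; simp only [Finset.mem_Icc]; omega
        · have := hsub h
          simp only [Finset.mem_Icc] at this ⊢
          omega
      · rw [Finset.card_insert_of_notMem hnotmem]
        omega
      · intro j hj
        rcases Finset.mem_insert.mp hj with h | h
        · subst h
          intro hc
          rcases Finset.mem_insert.mp hc with h' | h'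
          · omega
          · have := hsub h'
            simp only [Finset.mem_Icc] at this
            omega
        · intro hc
          rcases Finset.mem_insert.mp hc with h' | h'
          · have := hsub h
            simp only [Finset.mem_Icc] at this
            omega
          · exact hnc j h h'
    · intro J hJ
      simp only [Finset.mem_filter, not_not] at hJ
      exact Finset.insert_erase hJ.2
    · intro J' hJ'
      simp only [Finset.mem_filter, Finset.mem_powerset] at hJ'
      have hnotmem : m ∉ J' := by
        intro h
        have := hJ'.1 h
        simp only [Finset.mem_Icc] at this
        omega
      exact Finset.erase_insert hnotmem
    · intro J hJ
      simp only [Finset.mem_filter, not_not] at hJ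
      exact (Finset.mul_prod_erase J w hJ.2).symm
  calc T w m k = _ := hsplit.symm
    _ = T w (m - 1) k + w m * T w (m - 2) (k - 1) := by
        rw [hB]
        unfold T
        rw [hA]

lemma Urec {n : ℕ} (hn : 1 ≤ n) (k : ℤ) :
    U n k = U (n - 2) k + n ^ 2 * U (n - 2) (k - 1) := by
  classical
  have hsplit := Finset.sum_filter_add_sum_filter_not
      ((Finset.Icc 1 n).powerset.filter
        (fun J => (J.card : ℤ) = k ∧ ∀ j ∈ J, j % 2 = n % 2))
      (fun J => n ∉ J) (fun J => ∏ j ∈ J, j ^ 2)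
  have hA : ((Finset.Icc 1 n).powerset.filter
        (fun J => (J.card : ℤ) = k ∧ ∀ j ∈ J, j % 2 = n % 2)).filter (fun J => n ∉ J)
      = (Finset.Icc 1 (n - 2)).powerset.filter
        (fun J => (J.card : ℤ) = k ∧ ∀ j ∈ J, j % 2 = (n - 2) % 2) := by
    ext J
    simp only [Finset.mem_filter, Finset.mem_powerset, Finset.subset_iff, Finset.mem_Icc]
    constructor
    · rintro ⟨⟨hsub, hcard, hpar⟩, hm'⟩
      refine ⟨fun j hj => ?_, hcard, fun j hj => ?_⟩
      · have h1 := hsub hj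
        have h2 : j ≠ n := fun h => hm' (h ▸ hj)
        have h3 := hpar j hj
        omega
      · have h1 := hsub hj
        have h2 : j ≠ n := fun h => hm' (h ▸ hj)
        have h3 := hpar j hj
        omega
    · rintro ⟨hsub, hcard, hpar⟩
      refine ⟨⟨fun j hj => ?_, hcard, fun j hj => ?_⟩, fun hmem => ?_⟩
      · have h1 := hsub hj; omega
      · have h1 := hsub hj
        have h3 := hpar j hj
        omega
      · have h1 := hsub hmem; omega
  have hB : ∑ J ∈ ((Finset.Icc 1 n).powerset.filter
        (fun J => (J.card : ℤ) = k ∧ ∀ j ∈ J, j % 2 = n % 2)).filter (fun J => ¬ n ∉ J),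
        ∏ j ∈ J, j ^ 2
      = n ^ 2 * U (n - 2) (k - 1) := by
    unfold U
    rw [Finset.mul_sum]
    refine Finset.sum_nbij' (fun J => J.erase n) (fun J' => insert n J') ?_ ?_ ?_ ?_ ?_
    · intro J hJ
      simp only [Finset.mem_filter, Finset.mem_powerset, not_not] at hJ
      obtain ⟨⟨hsub, hcard, hpar⟩, hmem⟩ := hJ
      simp only [Finset.mem_filter, Finset.mem_powerset]
      refine ⟨?_, ?_, ?_⟩
      · intro j hj
        have hj' := Finset.mem_of_mem_erase hj
        have hne : j ≠ n := Finset.ne_of_mem_erase hj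
        have h1 := hsub hj'
        have h3 := hpar j hj'
        simp only [Finset.mem_Icc] at h1 ⊢
        omega
      · rw [Finset.card_erase_of_mem hmem]
        have h1 : 1 ≤ J.card := Finset.card_pos.mpr ⟨n, hmem⟩
        omega
      · intro j hj
        have hj' := Finset.mem_of_mem_erase hj
        have hne : j ≠ n := Finset.ne_of_mem_erase hj
        have h1 := hsub hj'
        have h3 := hpar j hj'
        simp only [Finset.mem_Icc] at h1
        omega
    · intro J' hJ'
      simp only [Finset.mem_filter, Finset.mem_powerset] at hJ'
      obtain ⟨hsub, hcard, hpar⟩ := hJ'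
      have hnotmem : n ∉ J' := by
        intro h
        have := hsub h
        simp only [Finset.mem_Icc] at this
        omega
      simp only [Finset.mem_filter, Finset.mem_powerset, not_not]
      refine ⟨⟨?_, ?_, ?_⟩, Finset.mem_insert_self n J'⟩
      · intro j hj
        rcases Finset.mem_insert.mp hj with h | h
        · subst h; simp only [Finset.mem_Icc]; omega
        · have := hsub h
          simp only [Finset.mem_Icc] at this ⊢
          omega
      · rw [Finset.card_insert_of_notMem hnotmem]
        omega
      · intro j hj
        rcases Finset.mem_insert.mp hj with h | h
        · omega
        · have := hsub h
          have h3 := hpar j h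
          simp only [Finset.mem_Icc] at this
          omega
    · intro J hJ
      simp only [Finset.mem_filter, not_not] at hJ
      exact Finset.insert_erase hJ.2
    · intro J' hJ'
      simp only [Finset.mem_filter, Finset.mem_powerset] at hJ'
      have hnotmem : n ∉ J' := by
        intro h
        have := hJ'.1 h
        simp only [Finset.mem_Icc] at this
        omega
      exact Finset.erase_insert hnotmem
    · intro J hJ
      simp only [Finset.mem_filter, not_not] at hJ
      exact (Finset.mul_prod_erase J (fun j => j ^ 2) hJ.2).symm
  calc U n k = _ := hsplit.symm
    _ = U (n - 2) k + n ^ 2 * U (n - 2) (k - 1) := by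
        rw [hB]
        unfold U
        rw [hA]

/-- The partial matching sums with weights j(n+1-j). -/
def q (n m : ℕ) (k : ℤ) : ℕ := T (fun j => j * (n + 1 - j)) m k

lemma qrec (n : ℕ) {m : ℕ} (hm : 1 ≤ m) (k : ℤ) :
    q n m k = q n (m - 1) k + (m * (n + 1 - m)) * q n (m - 2) (k - 1) :=
  Trec _ hm k

lemma key (m : ℕ) : ∀ n : ℕ, m ≤ n → ∀ k : ℤ,
    q n m k = q (n - 2) (m - 1) k + (n * m) * q (n - 2) (m - 2) (k - 1) := by
  induction m using Nat.strong_induction_on with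
  | _ m IH =>
    match m with
    | 0 =>
      intro n _ k
      simp only [q, Nat.zero_sub, Nat.mul_zero, Nat.zero_mul, T_zero]
      simp
    | 1 =>
      intro n hn k
      rw [qrec n le_rfl k]
      simp only [show (1:ℕ) - 1 = 0 from rfl, show (1:ℕ) - 2 = 0 from rfl]
      unfold q
      rw [T_zero, T_zero, T_zero, T_zero]
      have h : 1 * (n + 1 - 1) = n * 1 := by omega
      rw [h]
    | 2 =>
      intro n hn k
      obtain ⟨a, rfl⟩ : ∃ a, n = 2 + a := ⟨n - 2, by omega⟩
      rw [qrec (2 + a) (by omega : (1:ℕ) ≤ 2) k]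
      simp only [show (2:ℕ) - 1 = 1 from rfl, show (2:ℕ) - 2 = 0 from rfl,
        show 2 + a - 2 = a from by omega]
      rw [qrec (2 + a) (le_refl 1) k, qrec a (le_refl 1) k]
      simp only [show (1:ℕ) - 1 = 0 from rfl, show (1:ℕ) - 2 = 0 from rfl]
      unfold q
      simp only [T_zero]
      simp only [show 1 * (2 + a + 1 - 1) = a + 2 from by omega,
        show 2 * (2 + a + 1 - 2) = 2 * (a + 1) from by omega,
        show 1 * (a + 1 - 1) = a from by omega]
      ring
    | (c + 3) =>
      intro n hn k
      obtain ⟨a, rfl⟩ : ∃ a, n = c + 3 + a := ⟨n - (c + 3), by omega⟩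
      have h1 := qrec (c + 3 + a) (show 1 ≤ c + 3 by omega) k
      have h2 := IH (c + 2) (by omega) (c + 3 + a) (by omega) k
      have h3 := IH (c + 1) (by omega) (c + 3 + a) (by omega) (k - 1)
      have e1 := qrec (c + 3 + a - 2) (show 1 ≤ c + 2 by omega) k
      have e2 := qrec (c + 3 + a - 2) (show 1 ≤ c + 1 by omega) (k - 1)
      simp only [show c + 3 - 1 = c + 2 from by omega, show c + 3 - 2 = c + 1 from by omega,
        show c + 2 - 1 = c + 1 from by omega, show c + 2 - 2 = c from by omega,
        show c + 1 - 1 = c from by omega,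
        show c + 3 + a + 1 - (c + 3) = a + 1 from by omega,
        show c + 3 + a - 2 + 1 - (c + 2) = a from by omega,
        show c + 3 + a - 2 + 1 - (c + 1) = a + 1 from by omega] at h1 h2 h3 e1 e2 ⊢
      rw [h1, h2, h3, e1, e2]
      ring

lemma main : ∀ n : ℕ, ∀ k : ℤ, U n k = q n n k := by
  intro n
  induction n using Nat.strong_induction_on with
  | _ n IH =>
    match n with
    | 0 =>
      intro k
      rw [U_zero]
      unfold q
      rw [T_zero]
    | 1 =>
      intro k
      rw [Urec le_rfl k, qrec 1 le_rfl k]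
      simp only [show (1:ℕ) - 1 = 0 from rfl, show (1:ℕ) - 2 = 0 from rfl]
      unfold q
      rw [U_zero, U_zero, T_zero, T_zero]
      norm_num
    | 2 =>
      intro k
      rw [Urec (by omega : (1:ℕ) ≤ 2) k, qrec 2 (by omega : (1:ℕ) ≤ 2) k]
      simp only [show (2:ℕ) - 1 = 1 from rfl, show (2:ℕ) - 2 = 0 from rfl]
      rw [qrec 2 le_rfl k]
      simp only [show (1:ℕ) - 1 = 0 from rfl, show (1:ℕ) - 2 = 0 from rfl]
      unfold q
      rw [U_zero, U_zero, T_zero, T_zero]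
      norm_num
      split_ifs <;> norm_num
    | (d + 3) =>
      intro k
      have hU := Urec (show 1 ≤ d + 3 by omega) k
      have i1 := IH (d + 1) (by omega) k
      have i2 := IH (d + 1) (by omega) (k - 1)
      have h1 := qrec (d + 3) (show 1 ≤ d + 3 by omega) k
      have h2 := key (d + 2) (d + 3) (by omega) k
      have h3 := key (d + 1) (d + 3) (by omega) (k - 1)
      have h4 := qrec (d + 1) (show 1 ≤ d + 1 by omega) (k - 1)
      simp only [show d + 3 - 2 = d + 1 from by omega, show d + 3 - 1 = d + 2 from by omega,
        show d + 2 - 1 = d + 1 from by omega, show d + 2 - 2 = d from by omega,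
        show d + 1 - 1 = d from by omega,
        show d + 3 + 1 - (d + 3) = 1 from by omega,
        show d + 1 + 1 - (d + 1) = 1 from by omega] at hU h1 h2 h3 h4 ⊢
      rw [hU, i1, i2, h1, h2, h3, h4]
      ring

end BorweinAux

open BorweinAux in
theorem borwein_identity (n : ℕ) (hn : 1 ≤ n) (k : ℤ) :
    ∑ J ∈ (Finset.Icc 1 n).powerset.filter
        (fun J => (J.card : ℤ) = k ∧ ∀ j ∈ J, j % 2 = n % 2),
      ∏ j ∈ J, j ^ 2
    = ∑ J ∈ (Finset.Icc 1 n).powerset.filter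
        (fun J => (J.card : ℤ) = k ∧ ∀ j ∈ J, j + 1 ∉ J),
      ∏ j ∈ J, j * (n + 1 - j) :=
  BorweinAux.main n k
end

section
/- Let S_n be the (n+1)×(n+1) Kac matrix, with subdiagonal entries a_i = i and superdiagonal entries b_i = n+1−i (1 ≤ i ≤ n) and zeros elsewhere. Then for every integer d with 0 ≤ d ≤ n, n − 2d is an eigenvalue of S_n. -/
/-!
The Kac matrix is the transpose of the matrix, in the monomial basis of the polynomials of
degree at most `n`, of the operator `f ↦ n X f + (1 - X²) f'`, which sends `X^k` to
`k X^(k-1) + (n - k) X^(k+1)`. For `f = (1 - X)^d (1 + X)^(n - d)` the logarithmic derivative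
gives `(1 - X²) f' = ((n - 2d) - n X) f`, so `f` is an eigenfunction with eigenvalue `n - 2d`.
Its coefficient vector is then a left eigenvector of the Kac matrix, and a left eigenvalue is a
right one since both are roots of `det (M - μ)`.
-/

/-- The `(n+1) × (n+1)` Kac matrix: subdiagonal entries `1, 2, ..., n`
(the `(i+1, i)` entry is `i`), superdiagonal entries `n, n-1, ..., 1`
(the `(i, i+1)` entry is `n + 1 - i`), and zeros elsewhere. -/
def kacMatrix (n : ℕ) : Matrix (Fin (n + 1)) (Fin (n + 1)) ℝ :=
  Matrix.of fun i j =>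
    if (i : ℕ) = (j : ℕ) + 1 then (i : ℝ)
    else if (j : ℕ) = (i : ℕ) + 1 then (n : ℝ) + 1 - (j : ℝ)
    else 0

open Polynomial Matrix

theorem Matrix.exists_mulVec_eq_smul_of_vecMul_eq_smul {ι A : Type*} [Fintype ι] [DecidableEq ι]
    [CommRing A] [IsDomain A] {M : Matrix ι ι A} {μ : A} {v : ι → A} (hv : v ≠ 0)
    (h : v ᵥ* M = μ • v) : ∃ w ≠ 0, M *ᵥ w = μ • w := by
  have hdet : (M - μ • 1).det = 0 := exists_vecMul_eq_zero_iff.1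
    ⟨v, hv, by rw [vecMul_sub, h, vecMul_smul, vecMul_one, sub_self]⟩
  obtain ⟨w, hw, hMw⟩ := exists_mulVec_eq_zero_iff.2 hdet
  refine ⟨w, hw, ?_⟩
  rwa [sub_mulVec, smul_mulVec, one_mulVec, sub_eq_zero] at hMw

section

variable {R : Type*} [CommRing R]

noncomputable def kacOperator (n : ℕ) (f : R[X]) : R[X] :=
  C (n : R) * X * f + (1 - X ^ 2) * derivative f

theorem mul_derivative_pow (p : R[X]) (n : ℕ) :
    p * derivative (p ^ n) = C (n : R) * derivative p * p ^ n := by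
  rcases n with _ | n
  · simp
  · rw [derivative_pow_succ, pow_succ]
    push_cast
    ring

theorem coeff_X_mul_derivative (f : R[X]) (k : ℕ) :
    (X * derivative f).coeff k = k * f.coeff k := by
  rcases k with _ | k
  · simp
  · rw [coeff_X_mul, coeff_derivative, mul_comm]
    push_cast
    ring

theorem kacOperator_one_sub_pow_mul_one_add_pow (a b : ℕ) :
    kacOperator (a + b) ((1 - X : R[X]) ^ a * (1 + X) ^ b)
      = C ((b : R) - a) * ((1 - X) ^ a * (1 + X) ^ b) := by
  have ha := mul_derivative_pow (1 - X : R[X]) a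
  have hb := mul_derivative_pow (1 + X : R[X]) b
  simp only [derivative_sub, derivative_add, derivative_one, derivative_X] at ha hb
  rw [kacOperator, derivative_mul]
  simp only [Nat.cast_add, map_add, map_sub]
  linear_combination ((1 + X) ^ b * (1 + X)) * ha + ((1 - X) ^ a * (1 - X)) * hb

theorem coeff_kacOperator_zero (n : ℕ) (f : R[X]) :
    (kacOperator n f).coeff 0 = f.coeff 1 := by
  simp [kacOperator, sub_mul, coeff_derivative, mul_assoc]

theorem coeff_kacOperator_succ (n k : ℕ) (f : R[X]) :
    (kacOperator n f).coeff (k + 1) = (k + 2) * f.coeff (k + 2) + (n - k) * f.coeff k := by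
  rw [kacOperator, sub_mul, one_mul, sq, mul_assoc, mul_assoc, coeff_add, coeff_sub, coeff_C_mul,
    coeff_X_mul, coeff_X_mul, coeff_X_mul_derivative, coeff_derivative]
  push_cast
  ring

end

theorem kacMatrix_apply (n : ℕ) (i j : Fin (n + 1)) :
    kacMatrix n i j = (if (i : ℕ) = j + 1 then ((j : ℝ) + 1) else 0)
      + (if (j : ℕ) = i + 1 then ((n : ℝ) - i) else 0) := by
  simp only [kacMatrix, of_apply]
  split_ifs <;> first | omega | push_cast [*]; ring

theorem coeff_vecMul_kacMatrix {n : ℕ} {f : ℝ[X]} (hf : f.natDegree ≤ n) :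
    (fun i : Fin (n + 1) => f.coeff i) ᵥ* kacMatrix n
      = fun k : Fin (n + 1) => (kacOperator n f).coeff k := by
  ext ⟨k, hk⟩
  simp only [vecMul, dotProduct, kacMatrix_apply, mul_add, Finset.sum_add_distrib]
  rw [Fin.sum_univ_eq_sum_range (fun i => f.coeff i * if i = k + 1 then ((k : ℝ) + 1) else 0),
    Fin.sum_univ_eq_sum_range (fun i => f.coeff i * if k = i + 1 then ((n : ℝ) - i) else 0)]
  simp only [mul_ite, mul_zero, Finset.sum_ite_eq']
  -- the last column has no subdiagonal entry, matching `f.coeff (n + 1) = 0`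
  have hsub : (if k + 1 ∈ Finset.range (n + 1) then f.coeff (k + 1) * ((k : ℝ) + 1) else 0)
      = f.coeff (k + 1) * ((k : ℝ) + 1) := by
    refine ite_eq_left_iff.2 fun h => ?_
    rw [coeff_eq_zero_of_natDegree_lt (hf.trans_lt (by simpa using h)), zero_mul]
  rw [hsub]
  rcases k with _ | k
  · simp [coeff_kacOperator_zero]
  · simp only [add_left_inj, Finset.sum_ite_eq, Finset.mem_range, coeff_kacOperator_succ]
    rw [if_pos (by omega)]
    push_cast
    ring

theorem kac_has_eigenvalue (n : ℕ) (d : ℕ) (hd : d ≤ n) :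
    ∃ v : Fin (n + 1) → ℝ, v ≠ 0 ∧
      (kacMatrix n).mulVec v = ((n : ℝ) - 2 * d) • v := by
  have hdeg : ((1 - X : ℝ[X]) ^ d * (1 + X) ^ (n - d)).natDegree ≤ n := by
    compute_degree
    omega
  set f : ℝ[X] := (1 - X) ^ d * (1 + X) ^ (n - d)
  have heigen : kacOperator n f = C ((n : ℝ) - 2 * d) * f := by
    have h := kacOperator_one_sub_pow_mul_one_add_pow (R := ℝ) d (n - d)
    rwa [Nat.add_sub_cancel' hd, Nat.cast_sub hd, sub_sub, ← two_mul] at h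
  refine exists_mulVec_eq_smul_of_vecMul_eq_smul (v := fun i : Fin (n + 1) => f.coeff i)
    (fun h => by simpa [f, coeff_zero_eq_eval_zero] using congrFun h 0) ?_
  rw [coeff_vecMul_kacMatrix hdeg, heigen]
  ext k
  exact coeff_C_mul f
end

section
/- The characteristic polynomial of the (n+1)×(n+1) Kac matrix S_n equals Π_{d=0}^{n} (x − (n − 2d)). -/
open Polynomial

/-!
Conjugating by the lower unitriangular Pascal matrix `P = (choose i j)` turns `S_n` into the
upper bidiagonal matrix `U` with diagonal `n - 2j` and superdiagonal `n - j`. Column by column,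
`S_n P = P U` is the binomial identity
`i C(i-1, j) + (n-i) C(i+1, j) = (n-2j) C(i, j) + (n-j+1) C(i, j-1)`,
which follows from Pascal's rule and the absorption identities. As `det P = 1`, `S_n` and `U`
have the same characteristic polynomial, and that of the triangular `U` is read off its diagonal.
-/

open Matrix

theorem Nat.cast_choose_succ_right_eq {R : Type*} [CommRing R] (i m : ℕ) :
    (i.choose (m + 1) : R) * (m + 1) = i.choose m * ((i : R) - m) := by
  rcases le_or_gt m i with h | h
  · have := congrArg (Nat.cast (R := R)) (Nat.choose_succ_right_eq i m)
    push_cast [Nat.cast_sub h] at this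
    exact this
  · simp [Nat.choose_eq_zero_of_lt h, Nat.choose_eq_zero_of_lt (Nat.lt_succ_of_lt h)]

theorem Nat.cast_mul_choose_pred {R : Type*} [CommRing R] (i m : ℕ) :
    (i : R) * (i - 1).choose m = ((i : R) - m) * i.choose m := by
  rcases i with _ | t
  · cases m <;> simp
  rcases le_or_gt m (t + 1) with h | h
  · have := congrArg (Nat.cast (R := R)) (Nat.choose_mul_succ_eq t m)
    push_cast [Nat.cast_sub h] at this
    simp only [Nat.add_sub_cancel]
    push_cast
    linear_combination this
  · simp [Nat.choose_eq_zero_of_lt h, Nat.choose_eq_zero_of_lt (show t < m by omega)]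

theorem kac_choose_identity {R : Type*} [CommRing R] (n i m : ℕ) :
    (i : R) * (i - 1).choose (m + 1) + ((n : R) - i) * (i + 1).choose (m + 1) =
      i.choose (m + 1) * ((n : R) - 2 * (m + 1)) + i.choose m * ((n : R) - m) := by
  have hpred := Nat.cast_mul_choose_pred (R := R) i (m + 1)
  push_cast at hpred
  rw [Nat.choose_succ_succ', Nat.cast_add]
  linear_combination hpred + Nat.cast_choose_succ_right_eq (R := R) i m

theorem Matrix.charpoly_eq_of_mul_eq_mul {m R : Type*} [Fintype m] [DecidableEq m] [CommRing R]
    {A B P : Matrix m m R} (hP : IsUnit P.det) (h : A * P = P * B) :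
    A.charpoly = B.charpoly := by
  calc A.charpoly = (P * B * P⁻¹).charpoly := by rw [← h, mul_nonsing_inv_cancel_right P A hP]
    _ = (P⁻¹ * (P * B)).charpoly := charpoly_mul_comm _ _
    _ = B.charpoly := by rw [nonsing_inv_mul_cancel_left P B hP]

def pascalMatrix (R : Type*) [Semiring R] (m : ℕ) : Matrix (Fin m) (Fin m) R :=
  of fun i j => ((i : ℕ).choose j : R)

theorem pascalMatrix_det (R : Type*) [CommRing R] (m : ℕ) : (pascalMatrix R m).det = 1 := by
  rw [det_of_isLowerTriangular]
  · simp [pascalMatrix]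
  · intro i j (hij : i < j)
    simp [pascalMatrix, Nat.choose_eq_zero_of_lt hij]

def kacBidiagonal (n : ℕ) : Matrix (Fin (n + 1)) (Fin (n + 1)) ℝ :=
  of fun i j =>
    if (i : ℕ) = j then (n : ℝ) - 2 * (i : ℕ)
    else if (j : ℕ) = i + 1 then (n : ℝ) - (i : ℕ)
    else 0

theorem kacBidiagonal_charpoly (n : ℕ) :
    (kacBidiagonal n).charpoly = ∏ d ∈ Finset.range (n + 1), (X - C ((n : ℝ) - 2 * d)) := by
  rw [charpoly_of_isUpperTriangular,
    ← Fin.prod_univ_eq_prod_range (fun d => X - C ((n : ℝ) - 2 * d))]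
  · simp [kacBidiagonal]
  · intro i j (hij : j < i)
    simp only [kacBidiagonal, of_apply]
    rw [if_neg (by omega), if_neg (by omega)]

/- The coefficient `i` vanishes at `i = 0` and `n - i` at `i = n`, so the truncated `i - 1` and
the out-of-range index `i + 1` do no harm. -/
theorem sum_kacMatrix_mul (n : ℕ) (i : Fin (n + 1)) (f : ℕ → ℝ) :
    ∑ k : Fin (n + 1), kacMatrix n i k * f k = i * f (i - 1) + (n - i) * f (i + 1) := by
  simp only [kacMatrix, of_apply]
  rw [Fin.sum_univ_eq_sum_range (fun k => (if (i : ℕ) = k + 1 then (i : ℝ)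
      else if k = i + 1 then (n : ℝ) + 1 - k else 0) * f k),
    Finset.sum_eq_add ((i : ℕ) - 1) (i + 1) (by omega)]
  · congr 1
    · rcases Nat.eq_zero_or_pos (i : ℕ) with h | h
      · simp [h]
      · rw [if_pos (by omega)]
    · rw [if_neg (by omega), if_pos rfl]
      push_cast
      ring
  · intro k _ hk
    rw [if_neg (by omega), if_neg (by omega), zero_mul]
  · intro h
    exact absurd (Finset.mem_range.2 (by omega)) h
  · intro h
    have hi : (i : ℕ) = n := by simp at h; omega
    rw [if_neg (by omega), if_pos rfl, hi]
    push_cast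
    ring

theorem sum_mul_kacBidiagonal_zero (n : ℕ) (f : ℕ → ℝ) :
    ∑ k : Fin (n + 1), f k * kacBidiagonal n k 0 = f 0 * n := by
  rw [Fintype.sum_eq_single 0]
  · simp [kacBidiagonal]
  · intro k hk
    have : (k : ℕ) ≠ 0 := Fin.val_ne_zero_iff.mpr hk
    simp [kacBidiagonal, this]

theorem sum_mul_kacBidiagonal_succ (n : ℕ) (f : ℕ → ℝ) (j : Fin n) :
    ∑ k : Fin (n + 1), f k * kacBidiagonal n k j.succ =
      f (j + 1) * (n - 2 * (j + 1)) + f j * (n - j) := by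
  rw [Fintype.sum_eq_add j.succ j.castSucc (Fin.castSucc_lt_succ (i := j)).ne']
  · simp [kacBidiagonal]
  · rintro k ⟨hk₁, hk₂⟩
    have h₁ : (k : ℕ) ≠ j + 1 := fun h => hk₁ (Fin.ext (by simpa using h))
    have h₂ : (k : ℕ) ≠ j := fun h => hk₂ (Fin.ext (by simpa using h))
    simp only [kacBidiagonal, of_apply, Fin.val_succ]
    rw [if_neg (by omega), if_neg (by omega), mul_zero]

theorem kacMatrix_mul_pascalMatrix (n : ℕ) :
    kacMatrix n * pascalMatrix ℝ (n + 1) = pascalMatrix ℝ (n + 1) * kacBidiagonal n := by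
  ext i j
  simp only [mul_apply, pascalMatrix, of_apply]
  rw [sum_kacMatrix_mul n i fun k => (k.choose j : ℝ)]
  induction j using Fin.cases with
  | zero =>
    rw [sum_mul_kacBidiagonal_zero n fun k => ((i : ℕ).choose k : ℝ)]
    simp
  | succ j =>
    rw [sum_mul_kacBidiagonal_succ n (fun k => ((i : ℕ).choose k : ℝ)) j]
    simpa using kac_choose_identity (R := ℝ) n i j

theorem kac_charpoly (n : ℕ) :
    (kacMatrix n).charpoly =
      ∏ d ∈ Finset.range (n + 1), (X - C ((n : ℝ) - 2 * d)) := by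
  have hP : IsUnit (pascalMatrix ℝ (n + 1)).det := by simp [pascalMatrix_det]
  rw [charpoly_eq_of_mul_eq_mul hP (kacMatrix_mul_pascalMatrix n), kacBidiagonal_charpoly]
end

section
/- For all positive integers n and integers k, the coefficient of x^{n+1−2k} in the characteristic polynomial of the Kac matrix S_n equals (−1)^k times the sum over all k-subsets J of {1,...,n} whose elements are congruent to n mod 2 of Π_{j∈J} j^2. -/
open Finset Polynomial

/-! ### Auxiliary: binomial identities -/

lemma choose_succ_right_real (m b : ℕ) :
    ((b:ℝ)+1) * (m.choose (b+1)) = ((m:ℝ) - b) * (m.choose b) := by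
  rcases le_or_gt b m with h | h
  · have h1 := Nat.choose_succ_right_eq m b
    have : ((m.choose (b+1) * (b+1) : ℕ) : ℝ) = ((m.choose b * (m - b) : ℕ) : ℝ) := by
      rw [h1]
    push_cast [Nat.cast_sub h] at this
    linarith
  · rw [Nat.choose_eq_zero_of_lt h, Nat.choose_eq_zero_of_lt (by omega)]
    simp

lemma kac_key (n i b : ℕ) :
    (i:ℝ) * ((i-1).choose (b+1)) + ((n:ℝ) - i) * ((i+1).choose (b+1))
      = ((n:ℝ) - 2*(b+1)) * (i.choose (b+1)) + ((n:ℝ) - b) * (i.choose b) := by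
  rcases i with _ | i
  · rcases b with _ | b <;> simp [Nat.choose]
  · have R2 : ((i+1+1).choose (b+1) : ℝ) = (i+1).choose b + (i+1).choose (b+1) := by
      rw [Nat.choose_succ_succ (i+1) b]; push_cast; ring
    have R2' : ((i+1).choose (b+1) : ℝ) = i.choose b + i.choose (b+1) := by
      rw [Nat.choose_succ_succ i b]; push_cast; ring
    have R1 : ((i:ℝ)+1) * (i.choose b) = ((i+1).choose (b+1)) * ((b:ℝ)+1) := by
      have h := Nat.add_one_mul_choose_eq i b
      have : (((i+1) * i.choose b : ℕ) : ℝ) = (((i+1).choose (b+1) * (b+1) : ℕ) : ℝ) := by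
        exact_mod_cast congrArg (Nat.cast (R := ℝ)) h
      push_cast at this; linarith
    have R3 := choose_succ_right_real (i+1) b
    have hs : ((i+1:ℕ) - 1) = i := by omega
    rw [hs]
    push_cast at *
    nlinarith [R1, R2, R2', R3]

/-! ### Auxiliary matrices -/

/-- Pascal-type change of basis matrix. -/
def kacP (n : ℕ) : Matrix (Fin (n+1)) (Fin (n+1)) ℝ :=
  Matrix.of fun i b => ((i : ℕ).choose (b : ℕ) : ℝ) * (-2) ^ (b : ℕ)

/-- Upper bidiagonal matrix similar to the Kac matrix. -/
def kacT (n : ℕ) : Matrix (Fin (n+1)) (Fin (n+1)) ℝ :=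
  Matrix.of fun j b =>
    if (j : ℕ) = (b : ℕ) then (n : ℝ) - 2 * (j : ℝ)
    else if (j : ℕ) + 1 = (b : ℕ) then 2 * ((j : ℝ) - (n : ℝ)) else 0

lemma kac_mul_P_apply (n : ℕ) (i b : Fin (n+1)) :
    (kacMatrix n * kacP n) i b
      = (i:ℝ) * (((i:ℕ)-1).choose b) * (-2)^(b:ℕ)
        + ((n:ℝ) - (i:ℕ)) * (((i:ℕ)+1).choose b) * (-2)^(b:ℕ) := by
  rw [Matrix.mul_apply]
  have hrw : ∀ j : Fin (n+1), kacMatrix n i j * kacP n j b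
      = (if (j:ℕ) = (i:ℕ)-1 then (i:ℝ) * (((i:ℕ)-1).choose b) * (-2)^(b:ℕ) else 0)
        + (if (j:ℕ) = (i:ℕ)+1 then ((n:ℝ) - (i:ℕ)) * (((i:ℕ)+1).choose b) * (-2)^(b:ℕ) else 0) := by
    intro j
    simp only [kacMatrix, kacP, Matrix.of_apply]
    by_cases h1 : (i:ℕ) = (j:ℕ)+1
    · have hj : (j:ℕ) = (i:ℕ)-1 := by omega
      rw [if_pos h1, if_pos hj, if_neg (by omega), hj]
      ring
    · by_cases h2 : (j:ℕ) = (i:ℕ)+1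
      · rw [if_neg h1, if_pos h2, if_neg (by omega), if_pos h2, h2]
        push_cast
        ring
      · rw [if_neg h1, if_neg h2, if_neg h2]
        by_cases h3 : (j:ℕ) = (i:ℕ)-1
        · have i0 : (i:ℕ) = 0 := by omega
          rw [if_pos h3, i0]
          simp
        · rw [if_neg h3]; ring
  rw [Finset.sum_congr rfl (fun j _ => hrw j), Finset.sum_add_distrib]
  congr 1
  · have hc : ∀ j : Fin (n+1), ((j:ℕ) = (i:ℕ)-1) ↔ j = (⟨(i:ℕ)-1, by omega⟩ : Fin (n+1)) := by
      intro j; rw [Fin.ext_iff]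
    simp only [hc]
    rw [Finset.sum_ite_eq' univ _ (fun _ => (i:ℝ) * (((i:ℕ)-1).choose b) * (-2)^(b:ℕ))]
    simp
  · by_cases hi : (i:ℕ) < n
    · have hc : ∀ j : Fin (n+1), ((j:ℕ) = (i:ℕ)+1) ↔ j = (⟨(i:ℕ)+1, by omega⟩ : Fin (n+1)) := by
        intro j; rw [Fin.ext_iff]
      simp only [hc]
      rw [Finset.sum_ite_eq' univ _ (fun _ => ((n:ℝ) - (i:ℕ)) * (((i:ℕ)+1).choose b) * (-2)^(b:ℕ))]
      simp
    · have hi' : (i:ℕ) = n := by omega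
      have : ∀ j : Fin (n+1), ¬ ((j:ℕ) = (i:ℕ)+1) := by intro j; omega
      simp [this, hi']

lemma P_mul_T_apply (n : ℕ) (i b : Fin (n+1)) :
    (kacP n * kacT n) i b
      = ((i:ℕ).choose b : ℝ) * (-2)^(b:ℕ) * ((n:ℝ) - 2*(b:ℕ))
        + (if 1 ≤ (b:ℕ) then ((i:ℕ).choose ((b:ℕ)-1) : ℝ) * (-2)^((b:ℕ)-1)
            * (2 * ((((b:ℕ)-1 : ℕ):ℝ) - (n:ℝ))) else 0) := by
  rw [Matrix.mul_apply]
  have hrw : ∀ j : Fin (n+1), kacP n i j * kacT n j b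
      = (if (j:ℕ) = (b:ℕ) then ((i:ℕ).choose b : ℝ) * (-2)^(b:ℕ) * ((n:ℝ) - 2*(b:ℕ)) else 0)
        + (if (j:ℕ) = (b:ℕ)-1 ∧ 1 ≤ (b:ℕ) then ((i:ℕ).choose ((b:ℕ)-1) : ℝ) * (-2)^((b:ℕ)-1)
            * (2 * ((((b:ℕ)-1 : ℕ):ℝ) - (n:ℝ))) else 0) := by
    intro j
    simp only [kacP, kacT, Matrix.of_apply]
    by_cases h1 : (j:ℕ) = (b:ℕ)
    · rw [if_pos h1, if_pos h1, if_neg (by omega), h1]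
      ring
    · by_cases h2 : (j:ℕ) + 1 = (b:ℕ)
      · have hj : (j:ℕ) = (b:ℕ)-1 ∧ 1 ≤ (b:ℕ) := by omega
        rw [if_neg h1, if_pos h2, if_neg h1, if_pos hj, hj.1]
        ring
      · have : ¬ ((j:ℕ) = (b:ℕ)-1 ∧ 1 ≤ (b:ℕ)) := by omega
        rw [if_neg h1, if_neg h2, if_neg h1, if_neg this]
        ring
  rw [Finset.sum_congr rfl (fun j _ => hrw j), Finset.sum_add_distrib]
  congr 1
  · have hc : ∀ j : Fin (n+1), ((j:ℕ) = (b:ℕ)) ↔ j = b := by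
      intro j; rw [Fin.ext_iff]
    simp only [hc]
    rw [Finset.sum_ite_eq' univ _ (fun _ => ((i:ℕ).choose b : ℝ) * (-2)^(b:ℕ) * ((n:ℝ) - 2*(b:ℕ)))]
    simp
  · by_cases hb : 1 ≤ (b:ℕ)
    · have hc : ∀ j : Fin (n+1), ((j:ℕ) = (b:ℕ)-1 ∧ 1 ≤ (b:ℕ)) ↔ j = (⟨(b:ℕ)-1, by omega⟩ : Fin (n+1)) := by
        intro j; rw [Fin.ext_iff]; simpa using fun _ => hb
      simp only [hc]
      rw [Finset.sum_ite_eq' univ _ (fun _ => ((i:ℕ).choose ((b:ℕ)-1) : ℝ) * (-2)^((b:ℕ)-1)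
            * (2 * ((((b:ℕ)-1 : ℕ):ℝ) - (n:ℝ))))]
      simp [hb]
    · have : ∀ j : Fin (n+1), ¬ ((j:ℕ) = (b:ℕ)-1 ∧ 1 ≤ (b:ℕ)) := by intro j; omega
      simp [this, hb]

lemma kac_conj (n : ℕ) : kacMatrix n * kacP n = kacP n * kacT n := by
  ext i b
  rw [kac_mul_P_apply, P_mul_T_apply]
  rcases Nat.eq_zero_or_pos (b:ℕ) with hb | hb
  · rw [hb]
    rw [if_neg (by omega)]
    simp only [Nat.choose_zero_right, pow_zero, Nat.cast_one, Nat.cast_zero]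
    ring
  · obtain ⟨b', hb'⟩ : ∃ b', (b:ℕ) = b'+1 := ⟨(b:ℕ)-1, by omega⟩
    rw [hb', if_pos (by omega)]
    simp only [Nat.add_sub_cancel]
    push_cast
    linear_combination ((-2:ℝ)^(b'+1)) * kac_key n i b'

lemma kacP_det_ne_zero (n : ℕ) : (kacP n).det ≠ 0 := by
  have htri : (kacP n).BlockTriangular OrderDual.toDual := by
    intro i b hib
    have : (i:ℕ) < (b:ℕ) := hib
    simp [kacP, Nat.choose_eq_zero_of_lt this]
  rw [Matrix.det_of_lowerTriangular _ htri]
  apply Finset.prod_ne_zero_iff.2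
  intro b _
  simp [kacP, Nat.choose_self]

lemma kacT_charpoly (n : ℕ) :
    (kacT n).charpoly = ∏ b ∈ range (n+1), (X - C ((n:ℝ) - 2 * b)) := by
  have htri : (kacT n).BlockTriangular id := by
    intro j b hjb
    have : (b:ℕ) < (j:ℕ) := hjb
    simp only [kacT, Matrix.of_apply]
    rw [if_neg (by omega), if_neg (by omega)]
  rw [Matrix.charpoly_of_upperTriangular _ htri]
  rw [← Fin.prod_univ_eq_prod_range (fun b => (X - C ((n:ℝ) - 2 * b)))]
  apply Finset.prod_congr rfl
  intro b _
  simp [kacT]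

theorem charpoly_of_conj {n : ℕ} (K P T : Matrix (Fin (n+1)) (Fin (n+1)) ℝ)
    (h : K * P = P * T) (hdet : P.det ≠ 0) : K.charpoly = T.charpoly := by
  have hcomm : K.charmatrix * P.map C = P.map C * T.charmatrix := by
    unfold Matrix.charmatrix
    have h1 : (K.map C) * (P.map C) = (P.map C) * (T.map C) := by
      rw [← Matrix.map_mul, ← Matrix.map_mul, h]
    have h2 : Matrix.scalar (Fin (n+1)) (X : ℝ[X]) * P.map C
        = P.map C * Matrix.scalar (Fin (n+1)) (X : ℝ[X]) :=
      (Matrix.scalar_commute _ (fun r => Commute.all _ r) _)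
    simp only [RingHom.mapMatrix_apply]
    rw [Matrix.sub_mul, Matrix.mul_sub, h1, h2]
  have hd := congrArg Matrix.det hcomm
  rw [Matrix.det_mul, Matrix.det_mul] at hd
  have hPC : (P.map C).det = C P.det := by
    exact ((RingHom.map_det (C : ℝ →+* ℝ[X]) P).symm)
  rw [hPC] at hd
  have hC : (C P.det : ℝ[X]) ≠ 0 := by simpa using hdet
  unfold Matrix.charpoly
  apply mul_right_cancel₀ hC
  rw [hd, mul_comm]

/-! ### Combinatorics of the eigenvalue product -/

def kacE (n : ℕ) : Finset ℕ := (Finset.Icc 1 n).filter (fun j => j % 2 = n % 2)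

lemma kacE_succ_succ (n : ℕ) : kacE (n+2) = insert (n+2) (kacE n) := by
  ext j
  simp only [kacE, mem_filter, mem_Icc, mem_insert]
  omega

lemma notMem_kacE (n : ℕ) : (n+2) ∉ kacE n := by
  simp only [kacE, mem_filter, mem_Icc]
  omega

lemma kacE_card (n : ℕ) : (n+1) % 2 + 2 * (kacE n).card = n + 1 := by
  induction n using Nat.twoStepInduction with
  | zero => simp [kacE]
  | one => simp [kacE]; decide
  | more n ih _ =>
    rw [kacE_succ_succ, card_insert_of_notMem (notMem_kacE n)]
    omega

lemma kac_prod_eq (n : ℕ) :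
    ∏ b ∈ range (n+1), (X - C ((n:ℝ) - 2 * b)) =
      X ^ ((n+1) % 2) * ∏ j ∈ kacE n, ((X - C (j:ℝ)) * (X + C (j:ℝ))) := by
  induction n using Nat.twoStepInduction with
  | zero => simp [kacE]
  | one =>
    rw [show (1:ℕ)+1 = 2 from rfl, prod_range_succ, prod_range_one]
    have h : kacE 1 = {1} := by decide
    rw [h]
    simp only [prod_singleton]
    norm_num
  | more n ih _ =>
    rw [prod_range_succ, prod_range_succ']
    have e1 : (∏ b ∈ range (n+1+1-1), (X - C (((n+2:ℕ):ℝ) - 2 * ((b+1:ℕ):ℝ))))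
        = ∏ b ∈ range (n+1), (X - C ((n:ℝ) - 2 * (b:ℕ))) := by
      apply Finset.prod_congr rfl
      intro b _
      congr 1
      push_cast
      ring
    have e2 : (X - C (((n+2:ℕ):ℝ) - 2 * ((0:ℕ):ℝ))) = X - C (((n+2:ℕ):ℝ)) := by
      congr 1
      push_cast
      ring
    have e3 : (X - C (((n+2:ℕ):ℝ) - 2 * (((n+2:ℕ)):ℝ))) = X + C (((n+2:ℕ):ℝ)) := by
      rw [show ((n+2:ℕ):ℝ) - 2 * (((n+2:ℕ)):ℝ) = -(((n+2:ℕ)):ℝ) by ring, map_neg,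
        sub_neg_eq_add]
    rw [show ((n+2+1) % 2) = (n+1) % 2 by omega, kacE_succ_succ,
      prod_insert (notMem_kacE n)]
    push_cast at e1 e2 e3 ⊢
    rw [e1, e2, e3, ih]
    ring

lemma kac_coeff (n : ℕ) (k : ℤ) (m : ℕ) (hm : (m : ℤ) = (n : ℤ) + 1 - 2 * k) :
    (X ^ ((n+1) % 2) * ∏ j ∈ kacE n, ((X - C (j:ℝ)) * (X + C (j:ℝ)))).coeff m =
      (-1 : ℝ) ^ k *
        ∑ J ∈ (Finset.Icc 1 n).powerset.filter
            (fun J => (J.card : ℤ) = k ∧ ∀ j ∈ J, j % 2 = n % 2),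
          ∏ j ∈ J, (j : ℝ) ^ 2 := by
  have hexp : ∀ j : ℕ, (X - C (j:ℝ)) * (X + C (j:ℝ)) = C (-(j:ℝ)^2) + X^2 := by
    intro j; rw [map_neg, map_pow]; ring
  rw [Finset.prod_congr rfl (fun j _ => hexp j), Finset.prod_add]
  rw [Finset.mul_sum, finset_sum_coeff]
  have hterm : ∀ t ∈ (kacE n).powerset,
      (X ^ ((n+1) % 2) * ((∏ j ∈ t, C (-(j:ℝ)^2)) * ∏ j ∈ kacE n \ t, X^2)).coeff m
        = if m = (n+1) % 2 + 2 * ((kacE n).card - t.card) then ∏ j ∈ t, (-(j:ℝ)^2) else 0 := by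
    intro t ht
    rw [mem_powerset] at ht
    rw [prod_const, card_sdiff_of_subset ht, ← map_prod, ← pow_mul, ← mul_assoc, mul_comm (X ^ ((n+1)%2)),
      mul_assoc, ← pow_add, coeff_C_mul, coeff_X_pow, mul_ite, mul_one, mul_zero]
  rw [Finset.sum_congr rfl hterm, ← Finset.sum_filter]
  have hset : (kacE n).powerset.filter (fun t => m = (n+1) % 2 + 2 * ((kacE n).card - t.card))
      = (Finset.Icc 1 n).powerset.filter
          (fun J => (J.card : ℤ) = k ∧ ∀ j ∈ J, j % 2 = n % 2) := by
    have hE := kacE_card n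
    have hiff : ∀ t : Finset ℕ, t ⊆ kacE n ↔ (t ⊆ Finset.Icc 1 n ∧ ∀ j ∈ t, j % 2 = n % 2) := by
      intro t
      simp only [kacE, Finset.subset_iff, mem_filter]
      exact ⟨fun h => ⟨fun _ hx => (h hx).1, fun x hx => (h hx).2⟩,
        fun h _ hx => ⟨h.1 hx, h.2 _ hx⟩⟩
    ext t
    simp only [mem_filter, mem_powerset]
    constructor
    · rintro ⟨hsub, hcard⟩
      have h1 := (hiff t).mp hsub
      have hle : t.card ≤ (kacE n).card := card_le_card hsub
      exact ⟨h1.1, by omega, h1.2⟩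
    · rintro ⟨hsub, hcard, hpar⟩
      have hsub' : t ⊆ kacE n := (hiff t).mpr ⟨hsub, hpar⟩
      have hle : t.card ≤ (kacE n).card := card_le_card hsub'
      exact ⟨hsub', by omega⟩
  rw [hset, Finset.mul_sum]
  apply Finset.sum_congr rfl
  intro J hJ
  simp only [mem_filter] at hJ
  obtain ⟨-, hcard, -⟩ := hJ
  have hneg : ∏ j ∈ J, -(j:ℝ)^2 = (-1:ℝ)^J.card * ∏ j ∈ J, (j:ℝ)^2 := by
    rw [← prod_const, ← prod_mul_distrib]
    apply prod_congr rfl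
    intro j _
    ring
  rw [hneg, ← hcard, zpow_natCast]

theorem kac_charpoly_coeff (n : ℕ) (hn : 1 ≤ n) (k : ℤ) (m : ℕ)
    (hm : (m : ℤ) = (n : ℤ) + 1 - 2 * k) :
    ((kacMatrix n).charpoly).coeff m =
      (-1 : ℝ) ^ k *
        ∑ J ∈ (Finset.Icc 1 n).powerset.filter
            (fun J => (J.card : ℤ) = k ∧ ∀ j ∈ J, j % 2 = n % 2),
          ∏ j ∈ J, (j : ℝ) ^ 2 := by
  rw [charpoly_of_conj (kacMatrix n) (kacP n) (kacT n) (kac_conj n) (kacP_det_ne_zero n),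
    kacT_charpoly, kac_prod_eq, kac_coeff n k m hm]
end
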